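/- arXiv:1804.00386 — 3 statements merged into one kernel-verified Lean document; each statement's English description precedes it below -/
import Mathlib

section
/- Let K be a closed convex cone in ℝ^m. Let s¹, s² ∈ K, -y¹ ∈ N_K(s¹), -y² ∈ ri N_K(s²). For α ∈ (0,1) set (s,y) = α(s¹,y¹) + (1-α)(s²,y²). If -y ∈ N_K(s), then -y ∈ ri N_K(s). -/
open scoped RealInnerProductSpace

/-- Positive polar cone. -/
def posPolar {E : Type*} [NormedAddCommGroup E] [InnerProductSpace ℝ E] (K : Set E) : Set E :=
  {y | ∀ z ∈ K, 0 ≤ ⟪y, z⟫}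

/-- Normal cone of convex analysis at a point. -/
def normalCone {E : Type*} [NormedAddCommGroup E] [InnerProductSpace ℝ E] (K : Set E) (s : E) :
    Set E :=
  {v | ∀ z ∈ K, ⟪v, z - s⟫ ≤ 0}

/-- Metric characterization of the intrinsic interior. -/
lemma mem_intrinsicInterior_iff_ball {E : Type*} [NormedAddCommGroup E] [NormedSpace ℝ E]
    {s : Set E} {y : E} :
    y ∈ intrinsicInterior ℝ s ↔
      y ∈ affineSpan ℝ s ∧ ∃ ε > (0:ℝ), ∀ z ∈ affineSpan ℝ s, dist z y < ε → z ∈ s := by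
  constructor
  · rintro ⟨y', hy', rfl⟩
    refine ⟨y'.2, ?_⟩
    rw [mem_interior_iff_mem_nhds, nhds_subtype, Filter.mem_comap] at hy'
    obtain ⟨t, ht, hts⟩ := hy'
    obtain ⟨ε, hε, hball⟩ := Metric.mem_nhds_iff.mp ht
    refine ⟨ε, hε, fun z hz hd => ?_⟩
    exact hts (show ((⟨z, hz⟩ : affineSpan ℝ s) : E) ∈ t from hball hd)
  · rintro ⟨hyA, ε, hε, h⟩
    refine ⟨⟨y, hyA⟩, ?_, rfl⟩
    rw [mem_interior_iff_mem_nhds, nhds_subtype, Filter.mem_comap]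
    exact ⟨Metric.ball y ε, Metric.ball_mem_nhds _ hε,
      fun z hz => h z z.2 (Metric.mem_ball.mp hz)⟩

/-- A strict convex combination of a point of `s` with a point of the intrinsic interior of a
convex set `s` lies in the intrinsic interior. -/
lemma combo_mem_intrinsicInterior {E : Type*} [NormedAddCommGroup E] [NormedSpace ℝ E]
    {s : Set E} (hs : Convex ℝ s) {x y : E} (hx : x ∈ s) (hy : y ∈ intrinsicInterior ℝ s)
    {α : ℝ} (h0 : 0 < α) (h1 : α < 1) :
    α • x + (1 - α) • y ∈ intrinsicInterior ℝ s := by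
  rw [mem_intrinsicInterior_iff_ball] at hy ⊢
  obtain ⟨hyA, ε, hε, hball⟩ := hy
  have hxA : x ∈ affineSpan ℝ s := subset_affineSpan ℝ s hx
  have h1α : (0:ℝ) < 1 - α := by linarith
  have hwA : α • x + (1 - α) • y ∈ affineSpan ℝ s := by
    have := (affineSpan ℝ s).smul_vsub_vadd_mem α hxA hyA hyA
    have heq : α • (x -ᵥ y) +ᵥ y = α • x + (1 - α) • y := by
      simp only [vsub_eq_sub, vadd_eq_add]; module
    rwa [heq] at this
  refine ⟨hwA, (1 - α) * ε, by positivity, fun z hzA hd => ?_⟩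
  set w := α • x + (1 - α) • y with hw
  set z' := (1 - α)⁻¹ • (z - w) + y with hz'
  have hz'A : z' ∈ affineSpan ℝ s := by
    have := (affineSpan ℝ s).smul_vsub_vadd_mem (1 - α)⁻¹ hzA hwA hyA
    simpa [vsub_eq_sub, vadd_eq_add, hz'] using this
  have hdist : dist z' y < ε := by
    rw [dist_eq_norm]
    have heq2 : z' - y = (1 - α)⁻¹ • (z - w) := by rw [hz']; abel
    rw [heq2, norm_smul]
    rw [dist_eq_norm] at hd
    have hn : ‖(1 - α)⁻¹‖ = (1 - α)⁻¹ := by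
      rw [Real.norm_eq_abs, abs_of_pos (by positivity)]
    rw [hn]
    calc (1 - α)⁻¹ * ‖z - w‖ < (1 - α)⁻¹ * ((1 - α) * ε) := by
          apply mul_lt_mul_of_pos_left hd (by positivity)
      _ = ε := by field_simp
  have hz's : z' ∈ s := hball z' hz'A hdist
  have hzeq : z = α • x + (1 - α) • z' := by
    rw [hz', hw]
    rw [smul_add, smul_smul, mul_inv_cancel₀ (by linarith : (1:ℝ) - α ≠ 0)]
    module
  rw [hzeq]
  exact hs hx hz's h0.le h1α.le (by ring)

/-- In a cone, an element of the normal cone is perpendicular to the base point and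
nonpositive against the whole cone. -/
lemma normalCone_inner_eq_zero {E : Type*} [NormedAddCommGroup E] [InnerProductSpace ℝ E]
    {K : Set E} (hcone : ∀ (c : ℝ), 0 ≤ c → ∀ x ∈ K, c • x ∈ K)
    {s0 u : E} (hs0 : s0 ∈ K) (hu : u ∈ normalCone K s0) :
    ⟪u, s0⟫ = 0 ∧ ∀ z ∈ K, ⟪u, z⟫ ≤ 0 := by
  have h2 : (2:ℝ) • s0 ∈ K := hcone 2 (by norm_num) s0 hs0
  have h0 : (0:E) ∈ K := by
    have := hcone 0 le_rfl s0 hs0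
    rwa [zero_smul] at this
  have e1 := hu _ h2
  have e2 := hu _ h0
  have r1 : (2:ℝ) • s0 - s0 = s0 := by module
  have r2 : (0:E) - s0 = -s0 := by abel
  rw [r1] at e1
  rw [r2, inner_neg_right] at e2
  have hzero : ⟪u, s0⟫ = 0 := le_antisymm e1 (by linarith)
  refine ⟨hzero, fun z hz => ?_⟩
  have := hu z hz
  rw [inner_sub_right, hzero] at this
  linarith

set_option maxHeartbeats 1000000 in
theorem stmt4 {m : ℕ} (K : Set (EuclideanSpace ℝ (Fin m)))
    (hclosed : IsClosed K) (hconv : Convex ℝ K)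
    (hcone : ∀ (c : ℝ), 0 ≤ c → ∀ x ∈ K, c • x ∈ K)
    (s1 s2 y1 y2 : EuclideanSpace ℝ (Fin m))
    (hs1 : s1 ∈ K) (hs2 : s2 ∈ K)
    (hy1 : -y1 ∈ normalCone K s1)
    (hy2 : -y2 ∈ intrinsicInterior ℝ (normalCone K s2))
    (α : ℝ) (hα : α ∈ Set.Ioo (0 : ℝ) 1)
    (hy : -(α • y1 + (1 - α) • y2) ∈ normalCone K (α • s1 + (1 - α) • s2)) :
    -(α • y1 + (1 - α) • y2) ∈
      intrinsicInterior ℝ (normalCone K (α • s1 + (1 - α) • s2)) := by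
  obtain ⟨h0, h1⟩ := hα
  have h1α : (0:ℝ) < 1 - α := by linarith
  set s : EuclideanSpace ℝ (Fin m) := α • s1 + (1 - α) • s2 with hs_def
  have hsK : s ∈ K := hconv hs1 hs2 h0.le h1α.le (by ring)
  have hv2mem : -y2 ∈ normalCone K s2 := intrinsicInterior_subset hy2
  obtain ⟨hn1, hz1⟩ := normalCone_inner_eq_zero hcone hs1 hy1
  obtain ⟨hn2, hz2⟩ := normalCone_inner_eq_zero hcone hs2 hv2mem
  obtain ⟨hns, hzs⟩ := normalCone_inner_eq_zero hcone hsK hy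
  set v : EuclideanSpace ℝ (Fin m) := -(α • y1 + (1 - α) • y2) with hv_def
  have hvsplit : v = α • (-y1) + (1 - α) • (-y2) := by rw [hv_def]; module
  -- ⟪v, s1⟫ = 0 and ⟪v, s2⟫ = 0
  have hvs1le : ⟪v, s1⟫ ≤ 0 := hzs s1 hs1
  have hvs2le : ⟪v, s2⟫ ≤ 0 := hzs s2 hs2
  have hnssplit : ⟪v, s⟫ = α * ⟪v, s1⟫ + (1 - α) * ⟪v, s2⟫ := by
    rw [hs_def, inner_add_right, real_inner_smul_right, real_inner_smul_right]
  have hvs1 : ⟪v, s1⟫ = 0 := by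
    have ha : α * ⟪v, s1⟫ ≤ 0 := mul_nonpos_iff.mpr (Or.inl ⟨h0.le, hvs1le⟩)
    have hb : (1 - α) * ⟪v, s2⟫ ≤ 0 := mul_nonpos_iff.mpr (Or.inl ⟨h1α.le, hvs2le⟩)
    have hc : α * ⟪v, s1⟫ = 0 := by linarith [hns, hnssplit]
    rcases mul_eq_zero.mp hc with h | h
    · exact absurd h (ne_of_gt h0)
    · exact h
  have hvs2 : ⟪v, s2⟫ = 0 := by
    have ha : α * ⟪v, s1⟫ ≤ 0 := mul_nonpos_iff.mpr (Or.inl ⟨h0.le, hvs1le⟩)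
    have hb : (1 - α) * ⟪v, s2⟫ ≤ 0 := mul_nonpos_iff.mpr (Or.inl ⟨h1α.le, hvs2le⟩)
    have hc : (1 - α) * ⟪v, s2⟫ = 0 := by linarith [hns, hnssplit]
    rcases mul_eq_zero.mp hc with h | h
    · exact absurd h (ne_of_gt h1α)
    · exact h
  -- cross terms vanish
  have hvs1split : ⟪v, s1⟫ = α * ⟪-y1, s1⟫ + (1 - α) * ⟪-y2, s1⟫ := by
    rw [hvsplit, inner_add_left, real_inner_smul_left, real_inner_smul_left]
  have hvs2split : ⟪v, s2⟫ = α * ⟪-y1, s2⟫ + (1 - α) * ⟪-y2, s2⟫ := by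
    rw [hvsplit, inner_add_left, real_inner_smul_left, real_inner_smul_left]
  have hy2s1 : ⟪-y2, s1⟫ = 0 := by
    rw [hvs1split, hn1] at hvs1
    have hc : (1 - α) * ⟪-y2, s1⟫ = 0 := by linarith [hvs1]
    rcases mul_eq_zero.mp hc with h | h
    · exact absurd h (ne_of_gt h1α)
    · exact h
  have hy1s2 : ⟪-y1, s2⟫ = 0 := by
    rw [hvs2split, hn2] at hvs2
    have hc : α * ⟪-y1, s2⟫ = 0 := by linarith [hvs2]
    rcases mul_eq_zero.mp hc with h | h
    · exact absurd h (ne_of_gt h0)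
    · exact h
  -- -y1 belongs to the normal cone at s2
  have hv1D : -y1 ∈ normalCone K s2 := by
    intro z hz
    rw [inner_sub_right, hy1s2]
    have := hz1 z hz
    linarith
  have hA2' : ⟪-y2, s1 - s2⟫ = 0 := by rw [inner_sub_right, hy2s1, hn2]; ring
  -- every element of the normal cone at s2 is perpendicular to s1 - s2
  have hD_perp : ∀ u, u ∈ normalCone K s2 → ⟪u, s1 - s2⟫ = 0 := by
    intro u hu
    have hle : ⟪u, s1 - s2⟫ ≤ 0 := hu s1 hs1
    rcases (mem_intrinsicInterior_iff_ball.mp hy2) with ⟨hA, ε, hε, hball⟩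
    set n : ℝ := ‖(-y2) - u‖ with hn
    have hn0 : 0 ≤ n := norm_nonneg _
    set t : ℝ := ε / (2 * (n + 1)) with ht
    have ht0 : 0 < t := by positivity
    set p : EuclideanSpace ℝ (Fin m) := t • ((-y2) - u) + (-y2) with hp
    have hpA : p ∈ affineSpan ℝ (normalCone K s2) := by
      have huA : u ∈ affineSpan ℝ (normalCone K s2) := subset_affineSpan ℝ _ hu
      have hy2A : -y2 ∈ affineSpan ℝ (normalCone K s2) := hA
      have := (affineSpan ℝ (normalCone K s2)).smul_vsub_vadd_mem t hy2A huA hy2A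
      simpa [vsub_eq_sub, vadd_eq_add, hp] using this
    have hdist : dist p (-y2) < ε := by
      rw [dist_eq_norm]
      have heq3 : p - (-y2) = t • ((-y2) - u) := by rw [hp]; abel
      rw [heq3, norm_smul, Real.norm_eq_abs, abs_of_pos ht0, ← hn]
      have : t * n < ε := by
        rw [ht, div_mul_eq_mul_div, div_lt_iff₀ (by positivity)]
        nlinarith
      exact this
    have hpD : p ∈ normalCone K s2 := hball p hpA hdist
    have hps := hpD s1 hs1
    have hexp2 : ⟪p, s1 - s2⟫ = t * (⟪-y2, s1 - s2⟫ - ⟪u, s1 - s2⟫) + ⟪-y2, s1 - s2⟫ := by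
      rw [hp, inner_add_left, real_inner_smul_left, inner_sub_left]
    rw [hexp2, hA2'] at hps
    have hge : 0 ≤ ⟪u, s1 - s2⟫ := by nlinarith [hps, ht0]
    linarith
  -- the two normal cones coincide
  have hCD : normalCone K s = normalCone K s2 := by
    ext u
    constructor
    · intro hu
      have hfu : ⟪u, s1 - s2⟫ = 0 := by
        have e1 := hu s1 hs1
        have e2 := hu s2 hs2
        have r1 : s1 - s = (1 - α) • (s1 - s2) := by rw [hs_def]; module
        have r2 : s2 - s = (-α) • (s1 - s2) := by rw [hs_def]; module
        rw [r1, real_inner_smul_right] at e1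
        rw [r2, real_inner_smul_right] at e2
        have e1' : ⟪u, s1 - s2⟫ ≤ 0 := nonpos_of_mul_nonpos_right e1 h1α
        have e2' : 0 ≤ ⟪u, s1 - s2⟫ := by nlinarith [e2]
        linarith
      intro z hz
      have := hu z hz
      have r : z - s2 = (z - s) + α • (s1 - s2) := by rw [hs_def]; module
      rw [r, inner_add_right, real_inner_smul_right, hfu]
      linarith
    · intro hu
      have hfu := hD_perp u hu
      intro z hz
      have := hu z hz
      have r : z - s = (z - s2) + (-α) • (s1 - s2) := by rw [hs_def]; module
      rw [r, inner_add_right, real_inner_smul_right, hfu]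
      linarith
  have hconvD : Convex ℝ (normalCone K s2) := by
    intro u hu u' hu' a b ha hb hab
    intro z hz
    rw [inner_add_left, real_inner_smul_left, real_inner_smul_left]
    have h1' : a * ⟪u, z - s2⟫ ≤ 0 := mul_nonpos_iff.mpr (Or.inl ⟨ha, hu z hz⟩)
    have h2' : b * ⟪u', z - s2⟫ ≤ 0 := mul_nonpos_iff.mpr (Or.inl ⟨hb, hu' z hz⟩)
    linarith
  rw [hCD, hvsplit]
  exact combo_mem_intrinsicInterior hconvD hv1D hy2 h0 h1
end

section
/- With notation as in the complementarity system for the multifold conic problem, define B⁰ = {j : y^j = 0 for all (x,y) ∈ S} and N⁰ = {j : A^j x - b^j = 0 for all (x,y) ∈ S}. Then B ⊆ B⁰ and N ⊆ N⁰, where B and N are the index sets where some solution has primal slack in int K_j, respectively dual variable in int K_j⁺. -/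
/-!
If `(x, y)` and `(x', y')` both solve the system, then `Aᵀ (y - y') = 0`, so the dual difference is
orthogonal to the slack difference `A (x - x')`. Together with complementarity this makes the sum of the
cross terms `⟪y^j, A^j x' - b^j⟫ + ⟪y'^j, A^j x - b^j⟫` vanish; these terms are nonnegative, so every
solution is complementary to every other one. A vector of the dual cone that is orthogonal to an
interior point of the cone must vanish, and the same holds with the roles of `K_j` and `K_j⁺` swapped.
-/

open scoped RealInnerProductSpace

section PosPolar

variable {E : Type*} [NormedAddCommGroup E] [InnerProductSpace ℝ E]

theorem subset_posPolar_posPolar (K : Set E) : K ⊆ posPolar (posPolar K) :=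
  fun s hs _ hy => real_inner_comm s _ ▸ hy s hs

theorem eq_zero_of_mem_posPolar_of_inner_eq_zero {U : Set E} {s v : E} (hs : s ∈ interior U)
    (hv : v ∈ posPolar U) (h0 : ⟪v, s⟫ = 0) : v = 0 := by
  have hmin : IsLocalMin (fun u => ⟪v, u⟫) s := by
    filter_upwards [mem_interior_iff_mem_nhds.1 hs] with u hu
    exact h0 ▸ hv u hu
  have hform : innerSL ℝ v = 0 := hmin.hasFDerivAt_eq_zero (innerSL ℝ v).hasFDerivAt
  simpa using congrArg (fun f => f v) hform

end PosPolar

section Complementarity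

variable {ι : Type*} [Fintype ι] {F : ι → Type*} [∀ j, NormedAddCommGroup (F j)]
  [∀ j, InnerProductSpace ℝ (F j)]

theorem inner_eq_zero_of_complementary_of_sum_inner_sub_eq_zero {K : ∀ j, Set (F j)}
    {s s' y y' : ∀ j, F j} (hs : ∀ j, s j ∈ K j) (hs' : ∀ j, s' j ∈ K j)
    (hy : ∀ j, y j ∈ posPolar (K j)) (hy' : ∀ j, y' j ∈ posPolar (K j))
    (hc : ∀ j, ⟪y j, s j⟫ = 0) (hc' : ∀ j, ⟪y' j, s' j⟫ = 0)
    (horth : ∑ j, ⟪y j - y' j, s j - s' j⟫ = 0) (j : ι) : ⟪y j, s' j⟫ = 0 := by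
  have hcross : ∑ j, (⟪y j, s' j⟫ + ⟪y' j, s j⟫) = 0 := by
    rw [← neg_eq_zero, ← horth, ← Finset.sum_neg_distrib]
    refine Finset.sum_congr rfl fun i _ => ?_
    simp only [inner_sub_left, inner_sub_right, hc, hc']
    ring
  have hnonneg : ∀ i, 0 ≤ ⟪y i, s' i⟫ + ⟪y' i, s i⟫ :=
    fun i => add_nonneg (hy i _ (hs' i)) (hy' i _ (hs i))
  have hj := (Finset.sum_eq_zero_iff_of_nonneg fun i _ => hnonneg i).1 hcross j (Finset.mem_univ j)
  linarith [hy j _ (hs' j), hy' j _ (hs j)]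

variable {E : Type*} [NormedAddCommGroup E] [InnerProductSpace ℝ E] [FiniteDimensional ℝ E]
  [∀ j, FiniteDimensional ℝ (F j)]

theorem sum_inner_apply_eq_inner_sum_adjoint (A : ∀ j, E →ₗ[ℝ] F j) (y : ∀ j, F j) (z : E) :
    ∑ j, ⟪y j, A j z⟫ = ⟪∑ j, LinearMap.adjoint (A j) (y j), z⟫ := by
  simp only [sum_inner, LinearMap.adjoint_inner_left]

theorem sum_inner_sub_slack_eq_zero (A : ∀ j, E →ₗ[ℝ] F j) (b : ∀ j, F j) {x x' : E}
    {y y' : ∀ j, F j}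
    (hdual : ∑ j, LinearMap.adjoint (A j) (y j) = ∑ j, LinearMap.adjoint (A j) (y' j)) :
    ∑ j, ⟪y j - y' j, (A j x - b j) - (A j x' - b j)⟫ = 0 := by
  calc ∑ j, ⟪y j - y' j, (A j x - b j) - (A j x' - b j)⟫
      = ∑ j, ⟪y j - y' j, A j (x - x')⟫ := by simp only [sub_sub_sub_cancel_right, map_sub]
    _ = ⟪∑ j, LinearMap.adjoint (A j) (y j - y' j), x - x'⟫ :=
      sum_inner_apply_eq_inner_sum_adjoint A _ _
    _ = 0 := by simp only [map_sub, Finset.sum_sub_distrib, hdual, sub_self, inner_zero_left]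

end Complementarity

theorem stmt8_general {n r : ℕ} (q : Fin r → ℕ)
    (K : ∀ j, Set (EuclideanSpace ℝ (Fin (q j))))
    (A : ∀ j, EuclideanSpace ℝ (Fin n) →ₗ[ℝ] EuclideanSpace ℝ (Fin (q j)))
    (b : ∀ j, EuclideanSpace ℝ (Fin (q j))) (c : EuclideanSpace ℝ (Fin n))
    (S : Set ((EuclideanSpace ℝ (Fin n)) × ∀ j, EuclideanSpace ℝ (Fin (q j))))
    (hS : S = {p | (∀ j, A j p.1 - b j ∈ K j) ∧ (∀ j, p.2 j ∈ posPolar (K j)) ∧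
      (∀ j, ⟪p.2 j, A j p.1 - b j⟫ = 0) ∧
      ∑ j, LinearMap.adjoint (A j) (p.2 j) = c}) :
    (∀ j, (∃ p ∈ S, A j p.1 - b j ∈ interior (K j)) → ∀ p ∈ S, p.2 j = 0) ∧
    (∀ j, (∃ p ∈ S, p.2 j ∈ interior (posPolar (K j))) → ∀ p ∈ S, A j p.1 - b j = 0) := by
  have hcross : ∀ p ∈ S, ∀ p' ∈ S, ∀ j, ⟪p.2 j, A j p'.1 - b j⟫ = 0 := by
    rw [hS]
    rintro p ⟨hs, hy, hc, hdual⟩ p' ⟨hs', hy', hc', hdual'⟩ j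
    exact inner_eq_zero_of_complementary_of_sum_inner_sub_eq_zero hs hs' hy hy' hc hc'
      (sum_inner_sub_slack_eq_zero A b (hdual.trans hdual'.symm)) j
  constructor
  · rintro j ⟨p₀, hp₀, hint⟩ p hp
    exact eq_zero_of_mem_posPolar_of_inner_eq_zero hint ((hS ▸ hp).2.1 j) (hcross p hp p₀ hp₀ j)
  · rintro j ⟨p₀, hp₀, hint⟩ p hp
    exact eq_zero_of_mem_posPolar_of_inner_eq_zero hint
      (subset_posPolar_posPolar _ ((hS ▸ hp).1 j)) ((real_inner_comm _ _).trans (hcross p₀ hp₀ p hp j))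

theorem stmt8 {n r : ℕ} (q : Fin r → ℕ)
    (K : ∀ j, Set (EuclideanSpace ℝ (Fin (q j))))
    (hclosed : ∀ j, IsClosed (K j)) (hconv : ∀ j, Convex ℝ (K j))
    (hcone : ∀ j, ∀ (c : ℝ), 0 ≤ c → ∀ x ∈ K j, c • x ∈ K j)
    (hint : ∀ j, (interior (K j)).Nonempty)
    (A : ∀ j, EuclideanSpace ℝ (Fin n) →ₗ[ℝ] EuclideanSpace ℝ (Fin (q j)))
    (b : ∀ j, EuclideanSpace ℝ (Fin (q j))) (c : EuclideanSpace ℝ (Fin n))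
    (S : Set ((EuclideanSpace ℝ (Fin n)) × ∀ j, EuclideanSpace ℝ (Fin (q j))))
    (hS : S = {p | (∀ j, A j p.1 - b j ∈ K j) ∧ (∀ j, p.2 j ∈ posPolar (K j)) ∧
      (∀ j, ⟪p.2 j, A j p.1 - b j⟫ = 0) ∧
      ∑ j, LinearMap.adjoint (A j) (p.2 j) = c})
    (hne : S.Nonempty) :
    (∀ j, (∃ p ∈ S, A j p.1 - b j ∈ interior (K j)) → ∀ p ∈ S, p.2 j = 0) ∧
    (∀ j, (∃ p ∈ S, p.2 j ∈ interior (posPolar (K j))) → ∀ p ∈ S, A j p.1 - b j = 0) :=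
  stmt8_general q K A b c S hS
end

section
/- In the homogeneous multifold conic feasibility setting (b = 0, c = 0), suppose x satisfies Ax ∈ K with K = K₁×⋯×K_r, and v ∈ K_j⁺ satisfies A_jᵀ v ∈ Lin(cl(Aᵀ K⁺)), the lineality space of the closure of Aᵀ K⁺. Then ⟨A_j x, v⟩ = 0. -/
open scoped RealInnerProductSpace

theorem stmt19 {n r : ℕ} (q : Fin r → ℕ)
    (K : ∀ j, Set (EuclideanSpace ℝ (Fin (q j))))
    (hclosed : ∀ j, IsClosed (K j)) (hconv : ∀ j, Convex ℝ (K j))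
    (hcone : ∀ j, ∀ (c : ℝ), 0 ≤ c → ∀ x ∈ K j, c • x ∈ K j)
    (A : ∀ j, EuclideanSpace ℝ (Fin n) →ₗ[ℝ] EuclideanSpace ℝ (Fin (q j)))
    (x : EuclideanSpace ℝ (Fin n)) (hx : ∀ j, A j x ∈ K j)
    (T : Set (EuclideanSpace ℝ (Fin n)))
    (hT : T = {w | ∃ y : ∀ j, EuclideanSpace ℝ (Fin (q j)),
      (∀ j, y j ∈ posPolar (K j)) ∧ w = ∑ j, LinearMap.adjoint (A j) (y j)})
    (j0 : Fin r) (v : EuclideanSpace ℝ (Fin (q j0)))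
    (hv : v ∈ posPolar (K j0))
    (hlin : LinearMap.adjoint (A j0) v ∈ closure T ∩ (-(closure T))) :
    ⟪A j0 x, v⟫ = 0 := by
  have hposcl : ∀ w ∈ closure T, 0 ≤ ⟪x, w⟫ := by
    have hclosedS : IsClosed {w : EuclideanSpace ℝ (Fin n) | 0 ≤ ⟪x, w⟫} :=
      isClosed_le continuous_const (continuous_const.inner continuous_id)
    have hsub : T ⊆ {w : EuclideanSpace ℝ (Fin n) | 0 ≤ ⟪x, w⟫} := by
      rintro w hw
      rw [hT] at hw
      obtain ⟨y, hy, rfl⟩ := hw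
      simp only [Set.mem_setOf_eq, inner_sum]
      apply Finset.sum_nonneg
      intro j _
      rw [LinearMap.adjoint_inner_right, real_inner_comm]
      exact hy j _ (hx j)
    intro w hw
    exact closure_minimal hsub hclosedS hw
  have h1 : 0 ≤ ⟪x, LinearMap.adjoint (A j0) v⟫ := hposcl _ hlin.1
  have h2 : 0 ≤ ⟪x, -(LinearMap.adjoint (A j0) v)⟫ := hposcl _ (Set.mem_neg.mp hlin.2)
  rw [inner_neg_right] at h2
  rw [← LinearMap.adjoint_inner_right]
  linarith
end
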